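/- arXiv:math/0410410 — 4 statements merged into one kernel-verified Lean document; each statement's English description precedes it below -/
import Mathlib

section
/- Let G be a finite connected simple graph, let W be a positive weight function on G (W(q) > 0 for every vertex q), let v0 be a vertex of G, and let D be a distribution on G such that D(s) ≤ W(s) for all vertices s ≠ v0. If V_{{v0}}(D) ≤ V_{{v0}}(W), then there exists a distribution D* on G that is derivable from D, is contained in W, and satisfies V_{{v0}}(D*) = V_{{v0}}(D). -/
/-!
While `v0` holds more than `W v0` pebbles, comparing `V_{v0}(D) ≤ V_{v0}(W)` term by term yields a
vertex `q` with `D q < W q`; take one closest to `v0`. Every vertex strictly closer to `v0` then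
holds at least `W ≥ 1` pebbles, so a single pebble can be relayed from `v0` to `q` along a
geodesic. Each move of the relay goes one step away from `v0` and hence preserves `V_{v0}`; it
costs `v0` two pebbles, costs each intermediate vertex one, and gives `q` one, so `D ≤ W` away
from `v0` is kept while `D v0` strictly decreases.
-/

/-- A single pebbling move on graph `G`: remove two pebbles from a vertex `p`
(which must carry at least two pebbles) and add one pebble to an adjacent vertex `q`. -/
def PebblingMove {V : Type*} (G : SimpleGraph V) (D D' : V → ℕ) : Prop :=
  ∃ p q : V, G.Adj p q ∧ 2 ≤ D p ∧
    D' p = D p - 2 ∧ D' q = D q + 1 ∧ ∀ s : V, s ≠ p → s ≠ q → D' s = D s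

/-- `D'` is derivable from `D` by a (possibly empty) finite sequence of pebbling moves. -/
def Derivable {V : Type*} (G : SimpleGraph V) (D D' : V → ℕ) : Prop :=
  Relation.ReflTransGen (PebblingMove G) D D'

/-- `D` covers `W` if some distribution derivable from `D` contains `W`. -/
def Covers {V : Type*} (G : SimpleGraph V) (D W : V → ℕ) : Prop :=
  ∃ D' : V → ℕ, Derivable G D D' ∧ ∀ q : V, W q ≤ D' q

/-- The standard value `V_S(D) = ∑_q D(q) · 2^{d(q,S)}`, where
`d(q,S) = min_{r ∈ S} d(q,r)`. -/
noncomputable def stdVal {V : Type*} [Fintype V] (G : SimpleGraph V) (S : Set V)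
    (D : V → ℕ) : ℕ :=
  ∑ q : V, D q * 2 ^ sInf {d : ℕ | ∃ r ∈ S, G.dist q r = d}

/-- The stacking number `SN_W(G) = max_v ∑_u W(u) · 2^{d(u,v)}`. -/
noncomputable def SN {V : Type*} [Fintype V] (G : SimpleGraph V) (W : V → ℕ) : ℕ :=
  Finset.univ.sup fun v : V => ∑ u : V, W u * 2 ^ G.dist u v

namespace SimpleGraph

variable {V : Type*} {G : SimpleGraph V}

lemma Connected.exists_adj_dist_eq (hG : G.Connected) {u v : V} {k : ℕ}
    (h : G.dist u v = k + 1) : ∃ w, G.Adj u w ∧ G.dist w v = k := by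
  obtain ⟨p, hp⟩ := hG.exists_walk_length_eq_dist u v
  cases p with
  | nil => simp at h
  | @cons _ w _ hadj p =>
    refine ⟨w, hadj, le_antisymm ?_ ?_⟩
    · have := dist_le p
      rw [Walk.length_cons] at hp
      omega
    · have := hG.dist_triangle (u := u) (v := w) (w := v)
      rw [dist_eq_one_iff_adj.2 hadj] at this
      omega

end SimpleGraph

section MovePebble

variable {V : Type*} [DecidableEq V]

def movePebble (D : V → ℕ) (p r : V) : V → ℕ :=
  Function.update (Function.update D p (D p - 2)) r (D r + 1)

lemma movePebble_apply (D : V → ℕ) (p r s : V) :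
    movePebble D p r s = if s = r then D r + 1 else if s = p then D p - 2 else D s := by
  simp only [movePebble, Function.update_apply]

lemma pebblingMove_movePebble {G : SimpleGraph V} {D : V → ℕ} {p r : V} (h : G.Adj p r)
    (hp : 2 ≤ D p) : PebblingMove G D (movePebble D p r) := by
  refine ⟨p, r, h, hp, ?_, ?_, fun s hsp hsr => ?_⟩ <;>
    simp [movePebble_apply, h.ne, *]

lemma movePebble_add_single {D : V → ℕ} {p r : V} (hpr : p ≠ r) (hp : 2 ≤ D p) :
    movePebble D p r + Pi.single p 2 = D + Pi.single r 1 := by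
  ext s
  by_cases hsr : s = r
  · subst hsr; simp [movePebble_apply, hpr.symm]
  · by_cases hsp : s = p
    · subst hsp; simp [movePebble_apply, hsr]; omega
    · simp [movePebble_apply, hsr, hsp]

end MovePebble

section StdVal

variable {V : Type*} [Fintype V] {G : SimpleGraph V}

lemma stdVal_add (S : Set V) (D E : V → ℕ) :
    stdVal G S (D + E) = stdVal G S D + stdVal G S E := by
  simp only [stdVal, Pi.add_apply, add_mul, Finset.sum_add_distrib]

lemma stdVal_singleton (v0 : V) (D : V → ℕ) :
    stdVal G {v0} D = ∑ q : V, D q * 2 ^ G.dist q v0 := by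
  refine Finset.sum_congr rfl fun q _ => ?_
  have h : {d : ℕ | ∃ r ∈ ({v0} : Set V), G.dist q r = d} = {G.dist q v0} := by
    ext d; simp [eq_comm]
  rw [h, csInf_singleton]

lemma stdVal_singleton_single [DecidableEq V] (v0 r : V) (n : ℕ) :
    stdVal G {v0} (Pi.single r n) = n * 2 ^ G.dist r v0 := by
  simp [stdVal_singleton, Pi.single_apply]

lemma exists_lt_of_stdVal_le {S : Set V} {D W : V → ℕ} {v : V}
    (hval : stdVal G S D ≤ stdVal G S W) (hv : W v < D v) : ∃ q, D q < W q := by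
  by_contra! hWD
  refine absurd hval (not_le.2 (Finset.sum_lt_sum (fun q _ => ?_) ⟨v, Finset.mem_univ v, ?_⟩))
  · exact Nat.mul_le_mul_right _ (hWD q)
  · exact Nat.mul_lt_mul_of_pos_right hv (Nat.two_pow_pos _)

lemma stdVal_movePebble [DecidableEq V] {D : V → ℕ} {v0 p r : V} (hp : 2 ≤ D p)
    (hd : G.dist r v0 = G.dist p v0 + 1) :
    stdVal G {v0} (movePebble D p r) = stdVal G {v0} D := by
  have hpr : p ≠ r := by rintro rfl; omega
  have h := congrArg (stdVal G {v0}) (movePebble_add_single hpr hp)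
  rw [stdVal_add, stdVal_add, stdVal_singleton_single, stdVal_singleton_single, hd,
    pow_succ] at h
  omega

end StdVal

section Push

variable {V : Type*} [Fintype V] [DecidableEq V] {G : SimpleGraph V}

/- The pebble is relayed along a geodesic from `v0` to `q`: every vertex strictly between them
receives one pebble and sends on two, which is why it must already hold one. -/
lemma exists_derivable_push (hG : G.Connected) {v0 : V} {D : V → ℕ} (hD : 2 ≤ D v0) {k : ℕ}
    {q : V} (hq : G.dist q v0 = k + 1) (hpos : ∀ s ≠ v0, G.dist s v0 ≤ k → 1 ≤ D s) :
    ∃ D', Derivable G D D' ∧ D' q = D q + 1 ∧ D' v0 = D v0 - 2 ∧ (∀ s ≠ q, D' s ≤ D s) ∧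
      (∀ s ≠ q, k < G.dist s v0 → D' s = D s) ∧ stdVal G {v0} D' = stdVal G {v0} D := by
  have hqv0 : q ≠ v0 := by rintro rfl; simp at hq
  induction k generalizing q with
  | zero =>
    obtain ⟨w, hqw, hw⟩ := hG.exists_adj_dist_eq hq
    obtain rfl : w = v0 := hG.dist_eq_zero_iff.1 hw
    refine ⟨movePebble D w q, .single (pebblingMove_movePebble hqw.symm hD), ?_, ?_,
      fun s hsq => ?_, fun s hsq hs => ?_, stdVal_movePebble hD (by rw [hq, hw])⟩
    · simp [movePebble_apply]
    · simp [movePebble_apply, hqv0.symm]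
    · by_cases hsw : s = w <;> simp [movePebble_apply, hsq, hsw, hqv0.symm]
    · have hsw : s ≠ w := by rintro rfl; simp at hs
      simp [movePebble_apply, hsq, hsw]
  | succ k ih =>
    obtain ⟨w, hqw, hw⟩ := hG.exists_adj_dist_eq hq
    have hwv0 : w ≠ v0 := by rintro rfl; simp at hw
    obtain ⟨D1, hD1, hD1w, hD1v0, hD1le, hD1far, hD1val⟩ :=
      ih hw (fun s hs hsk => hpos s hs (by omega)) hwv0
    have hD1w2 : 2 ≤ D1 w := by have := hpos w hwv0 (by omega); omega
    have hD1q : D1 q = D q := hD1far q hqw.ne (by omega)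
    refine ⟨movePebble D1 w q, hD1.tail (pebblingMove_movePebble hqw.symm hD1w2), ?_, ?_,
      fun s hsq => ?_, fun s hsq hs => ?_, ?_⟩
    · simp [movePebble_apply, hD1q]
    · simp [movePebble_apply, hqv0.symm, hwv0.symm, hD1v0]
    · by_cases hsw : s = w
      · subst hsw; simp [movePebble_apply, hsq]; omega
      · simp [movePebble_apply, hsq, hsw, hD1le s hsw]
    · have hsw : s ≠ w := by rintro rfl; omega
      simp [movePebble_apply, hsq, hsw, hD1far s hsw (by omega)]
    · rw [stdVal_movePebble hD1w2 (by rw [hq, hw]), hD1val]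

lemma exists_derivable_lt_of_lt (hG : G.Connected) {W : V → ℕ} (hW : ∀ q, 0 < W q) {v0 : V}
    {D : V → ℕ} (hD : ∀ s ≠ v0, D s ≤ W s) (hval : stdVal G {v0} D ≤ stdVal G {v0} W)
    (hv0 : W v0 < D v0) :
    ∃ D', Derivable G D D' ∧ D' v0 < D v0 ∧ (∀ s ≠ v0, D' s ≤ W s) ∧
      stdVal G {v0} D' = stdVal G {v0} D := by
  obtain ⟨q0, hq0⟩ := exists_lt_of_stdVal_le hval hv0
  obtain ⟨q, hqT, hqmin⟩ := (Finset.univ.filter fun s => D s < W s).exists_min_image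
    (G.dist · v0) ⟨q0, by simpa using hq0⟩
  have hqW : D q < W q := (Finset.mem_filter.1 hqT).2
  have hqv0 : q ≠ v0 := by rintro rfl; omega
  obtain ⟨k, hk⟩ := Nat.exists_eq_add_one_of_ne_zero (hG.dist_eq_zero_iff.not.2 hqv0)
  have hpos : ∀ s ≠ v0, G.dist s v0 ≤ k → 1 ≤ D s := by
    intro s hs hsk
    by_contra! hDs
    have := hqmin s (by simpa [Nat.lt_one_iff.1 hDs] using hW s)
    omega
  obtain ⟨D', hD', hD'q, hD'v0, hD'le, -, hD'val⟩ :=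
    exists_derivable_push hG (by have := hW v0; omega) hk hpos
  refine ⟨D', hD', by omega, fun s hs => ?_, hD'val⟩
  by_cases hsq : s = q
  · subst hsq; omega
  · exact (hD'le s hsq).trans (hD s hs)

end Push

/-- Lemma 3 of the paper: if W is positive, D ≤ W away from v0, and
V_{v0}(D) ≤ V_{v0}(W), then there is a distribution D* derivable from D,
contained in W, with V_{v0}(D*) = V_{v0}(D). -/
theorem exists_derivable_contained {V : Type*} [Fintype V] (G : SimpleGraph V)
    (hG : G.Connected) (W : V → ℕ) (hW : ∀ q : V, 0 < W q) (v0 : V) (D : V → ℕ)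
    (hD : ∀ s : V, s ≠ v0 → D s ≤ W s)
    (hval : stdVal G {v0} D ≤ stdVal G {v0} W) :
    ∃ Dstar : V → ℕ, Derivable G D Dstar ∧ (∀ q : V, Dstar q ≤ W q) ∧
      stdVal G {v0} Dstar = stdVal G {v0} D := by
  classical
  induction hn : D v0 using Nat.strong_induction_on generalizing D with
  | _ n ih =>
  by_cases hv0 : D v0 ≤ W v0
  · refine ⟨D, .refl, fun q => ?_, rfl⟩
    by_cases hq : q = v0
    · exact hq ▸ hv0
    · exact hD q hq
  · obtain ⟨D1, hD1, hD1v0, hD1W, hD1val⟩ :=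
      exists_derivable_lt_of_lt hG hW hD hval (not_le.1 hv0)
    obtain ⟨Dstar, hDstar, hDstarW, hDstarval⟩ :=
      ih (D1 v0) (hn ▸ hD1v0) D1 hD1W (hD1val ▸ hval) rfl
    exact ⟨Dstar, hD1.trans hDstar, hDstarW, hDstarval.trans hD1val⟩
end

section
/- Let G be a finite connected simple graph, let W be a positive weight function on G (W(q) > 0 for every vertex q), let v0 be a vertex of G, and let D be a distribution on G such that D(s) ≤ W(s) for all vertices s ≠ v0. Then D covers W if and only if V_{{v0}}(D) ≥ V_{{v0}}(W). -/
section helpers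
variable {V : Type*}

private lemma sum_split2 [Fintype V] [DecidableEq V] (g : V → ℕ) (p : V) :
    ∑ r, g r = g p + ∑ r ∈ Finset.univ.erase p, g r :=
  (Finset.add_sum_erase _ g (Finset.mem_univ p)).symm

private lemma moves_adj (G : SimpleGraph V) {a c : V} (h : G.Adj a c) :
    ∀ (k : ℕ) (D : V → ℕ), 2 * k ≤ D a →
    ∃ D', Derivable G D D' ∧
      D' a = D a - 2 * k ∧ D' c = D c + k ∧ ∀ s, s ≠ a → s ≠ c → D' s = D s := by
  intro k
  induction k with
  | zero => intro D _; exact ⟨D, Relation.ReflTransGen.refl, by simp, by simp, fun _ _ _ => rfl⟩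
  | succ k ih =>
    intro D hk
    have hac : a ≠ c := h.ne
    classical
    set D1 : V → ℕ := fun s => if s = a then D a - 2 else if s = c then D c + 1 else D s with hD1
    have h2 : 2 ≤ D a := le_trans (by omega) hk
    have step : PebblingMove G D D1 :=
      ⟨a, c, h, h2, by simp [hD1], by simp [hD1, hac.symm], fun s hs hs' => by
        simp [hD1, hs, hs']⟩
    have hk1 : 2 * k ≤ D1 a := by
      have : D1 a = D a - 2 := by simp [hD1]
      omega
    obtain ⟨D', hder, ha, hc, hrest⟩ := ih D1 hk1
    refine ⟨D', Relation.ReflTransGen.head step hder, ?_, ?_, ?_⟩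
    · have : D1 a = D a - 2 := by simp [hD1]
      omega
    · have : D1 c = D c + 1 := by simp [hD1, hac.symm]
      omega
    · intro s hs hs'
      rw [hrest s hs hs']; simp [hD1, hs, hs']

private lemma send (G : SimpleGraph V) (hG : G.Connected) :
    ∀ (n : ℕ) (a b : V), a ≠ b → G.dist a b = n → ∀ (D : V → ℕ), 2 ^ n ≤ D a →
    ∃ D', Derivable G D D' ∧
      D' a = D a - 2 ^ n ∧ D' b = D b + 1 ∧ ∀ s, s ≠ a → s ≠ b → D' s = D s := by
  intro n
  induction n with
  | zero =>
    intro a b hab hd D _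
    exact absurd (hG.dist_eq_zero_iff.mp hd) hab
  | succ n ih =>
    intro a b hab hd D hD
    obtain ⟨w, hw⟩ := hG.exists_walk_length_eq_dist a b
    rw [hd] at hw
    cases w with
    | nil => simp at hw
    | cons h w' =>
      rename_i c
      have hw' : w'.length = n := by simpa using hw
      have hdcb : G.dist c b = n := by
        have h1 : G.dist c b ≤ n := hw' ▸ SimpleGraph.dist_le w'
        have h2 : G.dist a b ≤ G.dist a c + G.dist c b := hG.dist_triangle
        have h3 : G.dist a c ≤ 1 := by
          have := SimpleGraph.dist_le h.toWalk
          simpa using this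
        omega
      by_cases hcb : c = b
      · subst hcb
        have hn : n = 0 := by rw [← hdcb, SimpleGraph.dist_self]
        subst hn
        obtain ⟨D', hder, ha, hc, hrest⟩ := moves_adj G h 1 D (by simpa using hD)
        exact ⟨D', hder, by simpa using ha, by simpa using hc, hrest⟩
      · obtain ⟨D1, hder1, ha1, hc1, hrest1⟩ := moves_adj G h (2 ^ n) D (by
          have : 2 * 2 ^ n = 2 ^ (n + 1) := by ring
          omega)
        have hD1c : 2 ^ n ≤ D1 c := by omega
        obtain ⟨D', hder2, hc2, hb2, hrest2⟩ := ih c b hcb hdcb D1 hD1c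
        have hac : a ≠ c := h.ne
        refine ⟨D', hder1.trans hder2, ?_, ?_, ?_⟩
        · rw [hrest2 a hac hab, ha1]
          have : 2 * 2 ^ n = 2 ^ (n + 1) := by ring
          omega
        · rw [hb2, hrest1 b (Ne.symm hab) (Ne.symm hcb)]
        · intro s hs hs'
          by_cases hsc : s = c
          · subst hsc; omega
          · rw [hrest2 s hsc hs', hrest1 s hs hsc]

end helpers

private theorem covers_iff_val_ge {V : Type*} [Fintype V] (G : SimpleGraph V)
    (hG : G.Connected) (W : V → ℕ) (v0 : V) (D : V → ℕ)
    (hD : ∀ s : V, s ≠ v0 → D s ≤ W s) :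
    Covers G D W ↔
      (∑ q : V, W q * 2 ^ G.dist q v0) ≤ ∑ q : V, D q * 2 ^ G.dist q v0 := by
  classical
  set f : V → ℕ := fun q => 2 ^ G.dist q v0 with hf
  set val : (V → ℕ) → ℕ := fun X => ∑ q : V, X q * f q with hval
  have hfv0 : f v0 = 1 := by simp [hf, SimpleGraph.dist_self]
  have move_le : ∀ X Y, PebblingMove G X Y → val Y ≤ val X := by
    rintro X Y ⟨p, q, hadj, h2, hp, hq, hrest⟩
    have hpq : p ≠ q := hadj.ne
    have hsplitX := sum_split2 (fun r => X r * f r) p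
    have hsplitY := sum_split2 (fun r => Y r * f r) p
    have hqmem : q ∈ (Finset.univ.erase p) := Finset.mem_erase.mpr ⟨hpq.symm, Finset.mem_univ q⟩
    have hX2 := (Finset.add_sum_erase _ (fun r => X r * f r) hqmem).symm
    have hY2 := (Finset.add_sum_erase _ (fun r => Y r * f r) hqmem).symm
    have hrest_eq : ∑ r ∈ (Finset.univ.erase p).erase q, Y r * f r
        = ∑ r ∈ (Finset.univ.erase p).erase q, X r * f r := by
      refine Finset.sum_congr rfl fun r hr => ?_
      have h1 := Finset.mem_erase.mp hr
      have h2' := Finset.mem_erase.mp h1.2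
      rw [hrest r h2'.1 h1.1]
    have hfq : f q ≤ 2 * f p := by
      have h1 : G.dist q v0 ≤ G.dist q p + G.dist p v0 := hG.dist_triangle
      have h2' : G.dist q p ≤ 1 := by simpa using SimpleGraph.dist_le hadj.symm.toWalk
      calc f q = 2 ^ G.dist q v0 := rfl
        _ ≤ 2 ^ (1 + G.dist p v0) := Nat.pow_le_pow_right (by norm_num) (by omega)
        _ = 2 * f p := by rw [pow_add, pow_one]
    have e1 : Y p * f p + 2 * f p = X p * f p := by
      rw [hp]
      have h3 : X p - 2 + 2 = X p := by omega
      calc (X p - 2) * f p + 2 * f p = (X p - 2 + 2) * f p := by ring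
        _ = X p * f p := by rw [h3]
    have e2 : Y q * f q = X q * f q + f q := by rw [hq]; ring
    simp only [hval]
    rw [hsplitX, hsplitY, hX2, hY2, hrest_eq]
    linarith
  have der_le : ∀ X Y, Derivable G X Y → val Y ≤ val X := by
    intro X Y h
    induction h with
    | refl => exact le_rfl
    | tail _ hstep ih => exact le_trans (move_le _ _ hstep) ih
  constructor
  · rintro ⟨D', hder, hcov⟩
    have h1 : val W ≤ val D' :=
      Finset.sum_le_sum fun q _ => Nat.mul_le_mul_right _ (hcov q)
    exact le_trans h1 (der_le D D' hder)
  · intro hval_le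
    suffices H : ∀ (m : ℕ) (X : V → ℕ), (∀ s : V, s ≠ v0 → X s ≤ W s) →
        val W ≤ val X → (∑ q ∈ Finset.univ.erase v0, (W q - X q)) = m →
        Covers G X W by
      exact H _ D hD hval_le rfl
    intro m
    induction m with
    | zero =>
      intro X hX hvX hm
      have heq : ∀ q ∈ Finset.univ.erase v0, X q = W q := by
        intro q hq
        have h1 : W q - X q = 0 := Finset.sum_eq_zero_iff.mp hm q hq
        have h2 := hX q (Finset.mem_erase.mp hq).1
        omega
      have hv0 : W v0 ≤ X v0 := by
        have hsX := sum_split2 (fun r => X r * f r) v0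
        have hsW := sum_split2 (fun r => W r * f r) v0
        have hre : ∑ r ∈ Finset.univ.erase v0, X r * f r
            = ∑ r ∈ Finset.univ.erase v0, W r * f r :=
          Finset.sum_congr rfl fun r hr => by rw [heq r hr]
        simp only [hval] at hvX
        rw [hsX, hsW, hre, hfv0] at hvX
        linarith
      refine ⟨X, Relation.ReflTransGen.refl, fun q => ?_⟩
      by_cases hq : q = v0
      · subst hq; exact hv0
      · exact le_of_eq (heq q (Finset.mem_erase.mpr ⟨hq, Finset.mem_univ q⟩)).symm
    | succ m ih =>
      intro X hX hvX hm
      have hex : ∃ s ∈ Finset.univ.erase v0, 0 < W s - X s := by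
        by_contra hc
        push_neg at hc
        have : ∑ q ∈ Finset.univ.erase v0, (W q - X q) = 0 :=
          Finset.sum_eq_zero fun q hq => by have := hc q hq; omega
        omega
      obtain ⟨s, hs, hds⟩ := hex
      have hsv0 : s ≠ v0 := (Finset.mem_erase.mp hs).1
      set n := G.dist v0 s with hn
      have hfs : f s = 2 ^ n := by rw [hf]; simp only; rw [hn, SimpleGraph.dist_comm]
      have hsX := sum_split2 (fun r => X r * f r) v0
      have hsW := sum_split2 (fun r => W r * f r) v0
      have hX2 := (Finset.add_sum_erase _ (fun r => X r * f r) hs).symm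
      have hW2 := (Finset.add_sum_erase _ (fun r => W r * f r) hs).symm
      have hrest_le : ∑ r ∈ (Finset.univ.erase v0).erase s, X r * f r
          ≤ ∑ r ∈ (Finset.univ.erase v0).erase s, W r * f r := by
        refine Finset.sum_le_sum fun r hr => ?_
        have h1 := Finset.mem_erase.mp hr
        have h2 := Finset.mem_erase.mp h1.2
        exact Nat.mul_le_mul_right _ (hX r h2.1)
      have hXsWs : X s + 1 ≤ W s := by omega
      have hterm : X s * f s + f s ≤ W s * f s := by
        calc X s * f s + f s = (X s + 1) * f s := by ring
          _ ≤ W s * f s := Nat.mul_le_mul_right _ hXsWs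
      have hpow_le : 2 ^ n ≤ X v0 := by
        simp only [hval] at hvX
        rw [hsX, hsW, hX2, hW2, hfv0] at hvX
        linarith
      obtain ⟨X1, hder, hXv0, hXs, hrest⟩ := send G hG n v0 s (Ne.symm hsv0) rfl X hpow_le
      have hX1 : ∀ q : V, q ≠ v0 → X1 q ≤ W q := by
        intro q hq
        by_cases hqs : q = s
        · subst hqs; omega
        · rw [hrest q hq hqs]; exact hX q hq
      have hvX1 : val W ≤ val X1 := by
        have hveq : val X1 = val X := by
          have hsX1 := sum_split2 (fun r => X1 r * f r) v0
          have hX12 := (Finset.add_sum_erase _ (fun r => X1 r * f r) hs).symm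
          have hre : ∑ r ∈ (Finset.univ.erase v0).erase s, X1 r * f r
              = ∑ r ∈ (Finset.univ.erase v0).erase s, X r * f r := by
            refine Finset.sum_congr rfl fun r hr => ?_
            have h1 := Finset.mem_erase.mp hr
            have h2 := Finset.mem_erase.mp h1.2
            rw [hrest r h2.1 h1.1]
          have hcancel : X1 v0 + 2 ^ n = X v0 := by omega
          have e2 : X1 s * f s = X s * f s + f s := by rw [hXs]; ring
          simp only [hval]
          rw [hsX1, hsX, hX12, hX2, hre, hfv0]
          linarith
        omega
      have hm1 : (∑ q ∈ Finset.univ.erase v0, (W q - X1 q)) = m := by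
        rw [← Finset.add_sum_erase _ _ hs] at hm ⊢
        have hre : ∑ r ∈ (Finset.univ.erase v0).erase s, (W r - X1 r)
            = ∑ r ∈ (Finset.univ.erase v0).erase s, (W r - X r) := by
          refine Finset.sum_congr rfl fun r hr => ?_
          have h1 := Finset.mem_erase.mp hr
          have h2 := Finset.mem_erase.mp h1.2
          rw [hrest r h2.1 h1.1]
        rw [hre]
        omega
      obtain ⟨D', hder2, hcov⟩ := ih X1 hX1 hvX1 hm1
      exact ⟨D', hder.trans hder2, hcov⟩

/-- Lemma 4 of the paper: if W is positive and D ≤ W away from v0, then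
D covers W iff V_{v0}(D) ≥ V_{v0}(W). -/
theorem covers_iff_stdVal_ge {V : Type*} [Fintype V] (G : SimpleGraph V)
    (hG : G.Connected) (W : V → ℕ) (hW : ∀ q : V, 0 < W q) (v0 : V) (D : V → ℕ)
    (hD : ∀ s : V, s ≠ v0 → D s ≤ W s) :
    Covers G D W ↔ stdVal G {v0} W ≤ stdVal G {v0} D := by
  have hstd : ∀ X : V → ℕ, stdVal G {v0} X = ∑ q : V, X q * 2 ^ G.dist q v0 := by
    intro X
    unfold stdVal
    refine Finset.sum_congr rfl fun q _ => ?_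
    have hset : {d : ℕ | ∃ r ∈ ({v0} : Set V), G.dist q r = d} = {G.dist q v0} := by
      ext d; simp [eq_comm]
    rw [hset, csInf_singleton]
  rw [hstd, hstd]
  exact covers_iff_val_ge G hG W v0 D hD
end

section
/- Let G be a finite connected simple graph and let W be a positive weight function on G (W(q) > 0 for every vertex q). Let q be a vertex of G at which V_{{q}}(W) = Σ_{u ∈ V(G)} W(u) · 2^{d(u,q)} is maximum, and let D be the distribution placing SN_W(G) − 1 pebbles on q and 0 pebbles on every other vertex, where SN_W(G) = max_{v ∈ V(G)} Σ_{u ∈ V(G)} W(u) · 2^{d(u,v)}. Then D does not cover W. -/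
/-- Stacking theorem (sharpness): placing SN_W(G) − 1 pebbles on a vertex q
maximizing V_{q}(W) fails to cover W. -/
theorem not_covers_stack {V : Type*} [Fintype V] [DecidableEq V] (G : SimpleGraph V)
    (hG : G.Connected) (W : V → ℕ) (hW : ∀ u : V, 0 < W u) (q : V)
    (hq : ∀ v : V, (∑ u : V, W u * 2 ^ G.dist u v) ≤ ∑ u : V, W u * 2 ^ G.dist u q) :
    ¬ Covers G (fun s : V => if s = q then SN G W - 1 else 0) W := by
  classical
  rintro ⟨D', hder, hcov⟩
  set w : V → ℕ := fun u => 2 ^ G.dist u q with hw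
  -- Φ is nonincreasing under a single move
  have key : ∀ A B : V → ℕ, PebblingMove G A B →
      (∑ u : V, B u * w u) ≤ ∑ u : V, A u * w u := by
    rintro A B ⟨p, r, hadj, h2, hBp, hBr, hrest⟩
    have hpr : p ≠ r := hadj.ne
    have hd : G.dist r q ≤ G.dist p q + 1 := by
      calc G.dist r q ≤ G.dist r p + G.dist p q := hG.dist_triangle
        _ = 1 + G.dist p q := by
            rw [(SimpleGraph.dist_eq_one_iff_adj).2 hadj.symm]
        _ = G.dist p q + 1 := by ring
    have hwr : (w r : ℤ) ≤ 2 * w p := by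
      have : (2:ℕ) ^ G.dist r q ≤ 2 ^ (G.dist p q + 1) :=
        Nat.pow_le_pow_right (by norm_num) hd
      have : (w r : ℕ) ≤ 2 * w p := by
        simpa [hw, pow_succ, mul_comm] using this
      exact_mod_cast this
    have hsum : (∑ u : V, (A u : ℤ) * w u) - (∑ u : V, (B u : ℤ) * w u)
        = 2 * w p - w r := by
      have h1 : (∑ u : V, ((A u : ℤ) * w u - (B u : ℤ) * w u))
          = ∑ u ∈ ({p, r} : Finset V), ((A u : ℤ) * w u - (B u : ℤ) * w u) := by
        refine (Finset.sum_subset (Finset.subset_univ _) ?_).symm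
        intro x _ hx
        simp only [Finset.mem_insert, Finset.mem_singleton, not_or] at hx
        rw [hrest x hx.1 hx.2]; ring
      have h2' : ((B p : ℤ)) = (A p : ℤ) - 2 := by
        rw [hBp]; push_cast [Nat.cast_sub h2]; ring
      have h3' : ((B r : ℤ)) = (A r : ℤ) + 1 := by rw [hBr]; push_cast; ring
      rw [Finset.sum_sub_distrib] at h1
      rw [h1, Finset.sum_pair hpr, h2', h3']
      ring
    have : (∑ u : V, (B u : ℤ) * w u) ≤ ∑ u : V, (A u : ℤ) * w u := by
      omega
    exact_mod_cast (by push_cast at this ⊢; exact this :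
      ((∑ u : V, (B u : ℕ) * w u : ℕ) : ℤ) ≤ ((∑ u : V, (A u : ℕ) * w u : ℕ) : ℤ))
  -- nonincreasing along derivations
  have mono : ∀ A B : V → ℕ, Derivable G A B →
      (∑ u : V, B u * w u) ≤ ∑ u : V, A u * w u := by
    intro A B h
    induction h with
    | refl => exact le_refl _
    | tail _ hstep ih => exact le_trans (key _ _ hstep) ih
  have hSN : SN G W = ∑ u : V, W u * 2 ^ G.dist u q := by
    refine le_antisymm (Finset.sup_le fun v _ => hq v) ?_
    exact Finset.le_sup (f := fun v : V => ∑ u : V, W u * 2 ^ G.dist u v) (Finset.mem_univ q)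
  have hSNpos : 1 ≤ SN G W := by
    rw [hSN]
    calc 1 ≤ W q * 2 ^ G.dist q q := by
          have := hW q; nlinarith [Nat.one_le_two_pow (n := G.dist q q)]
      _ ≤ ∑ u : V, W u * 2 ^ G.dist u q := Finset.single_le_sum
          (f := fun u : V => W u * 2 ^ G.dist u q) (fun u _ => Nat.zero_le _) (Finset.mem_univ q)
  have hinit : (∑ u : V, (if u = q then SN G W - 1 else 0) * w u) = SN G W - 1 := by
    rw [Finset.sum_eq_single q]
    · simp [hw, SimpleGraph.dist_self]
    · intro b _ hb; simp [hb]
    · intro h; exact absurd (Finset.mem_univ q) h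
  have hfin : SN G W ≤ ∑ u : V, D' u * w u := by
    rw [hSN]
    exact Finset.sum_le_sum fun u _ => Nat.mul_le_mul_right _ (hcov u)
  have := mono _ _ hder
  rw [hinit] at this
  omega
end

section
/- Let G and H be finite connected simple graphs, let W1 and W2 be weight functions on G and H respectively, and define the weight function W1 × W2 on the Cartesian (box) product graph G □ H by (W1 × W2)(g,h) = W1(g)·W2(h). Then for every vertex (g,h) of G □ H, Σ_{(g*,h*) ∈ V(G □ H)} (W1 × W2)(g*,h*) · 2^{d((g,h),(g*,h*))} = (Σ_{g* ∈ V(G)} W1(g*) · 2^{d(g,g*)}) · (Σ_{h* ∈ V(H)} W2(h*) · 2^{d(h,h*)}); consequently SN_{W1 × W2}(G □ H) = SN_{W1}(G) · SN_{W2}(H). -/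
/-!
Distances in a box product of connected graphs add up coordinatewise, so the weight
`2 ^ d((g,h),(g',h'))` factors as `2 ^ d(g,g') * 2 ^ d(h,h')` and the weighted sum over the
product splits into the product of the two weighted sums. Taking the maximum over vertices
commutes with this product since multiplication is monotone and fixes the bottom element `0`.
-/

namespace Finset

variable {ι κ M : Type*} [CommSemiring M] [LinearOrder M] [OrderBot M]
  [CanonicallyOrderedAdd M] [IsOrderedRing M]

theorem mul_sup_eq_sup_mul (a : M) (s : Finset ι) (f : ι → M) :
    a * s.sup f = s.sup fun i => a * f i :=
  apply_sup_eq_sup_comp_of_linearOrder (a * ·)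
    (fun _ _ hxy => mul_le_mul_of_nonneg_left hxy zero_le) (by simp)

theorem sup_product_mul (s : Finset ι) (t : Finset κ) (f : ι → M) (g : κ → M) :
    (s ×ˢ t).sup (fun p => f p.1 * g p.2) = s.sup f * t.sup g := by
  rw [sup_product_left, mul_comm, mul_sup_eq_sup_mul]
  refine sup_congr rfl fun i _ => ?_
  rw [mul_comm, mul_sup_eq_sup_mul]

end Finset

namespace SimpleGraph

variable {α β : Type*} {G : SimpleGraph α} {H : SimpleGraph β}

theorem dist_boxProd_of_reachable {x y : α × β} (hG : G.Reachable x.1 y.1)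
    (hH : H.Reachable x.2 y.2) :
    (G □ H).dist x y = G.dist x.1 y.1 + H.dist x.2 y.2 := by
  have hGH : (G □ H).Reachable x y := reachable_boxProd.2 ⟨hG, hH⟩
  apply Nat.cast_injective (R := ℕ∞)
  rw [Nat.cast_add, hGH.coe_dist_eq_edist, hG.coe_dist_eq_edist, hH.coe_dist_eq_edist,
    edist_boxProd]

theorem sum_boxProd_mul_pow_dist {R : Type*} [CommSemiring R] [Fintype α] [Fintype β]
    (hG : G.Connected) (hH : H.Connected) (W₁ : α → R) (W₂ : β → R) (r : R) (x : α × β) :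
    ∑ y : α × β, W₁ y.1 * W₂ y.2 * r ^ (G □ H).dist x y =
      (∑ a, W₁ a * r ^ G.dist x.1 a) * (∑ b, W₂ b * r ^ H.dist x.2 b) := by
  rw [Finset.sum_mul_sum, ← Finset.univ_product_univ, Finset.sum_product]
  refine Finset.sum_congr rfl fun a _ => Finset.sum_congr rfl fun b _ => ?_
  rw [dist_boxProd_of_reachable (hG.preconnected _ _) (hH.preconnected _ _), pow_add]
  ring

end SimpleGraph

theorem SN_eq_sup_sum_mul_pow_dist_from {V : Type*} [Fintype V] (G : SimpleGraph V)
    (W : V → ℕ) : SN G W = Finset.univ.sup fun v => ∑ u, W u * 2 ^ G.dist v u := by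
  simp only [SN, SimpleGraph.dist_comm]

/-- Product formula for stacking numbers on the Cartesian (box) product. -/
theorem SN_boxProd {α β : Type*} [Fintype α] [Fintype β]
    (G : SimpleGraph α) (H : SimpleGraph β) (hG : G.Connected) (hH : H.Connected)
    (W1 : α → ℕ) (W2 : β → ℕ) :
    (∀ g : α, ∀ h : β,
      (∑ p : α × β, (W1 p.1 * W2 p.2) * 2 ^ (G □ H).dist (g, h) p) =
        (∑ g' : α, W1 g' * 2 ^ G.dist g g') * (∑ h' : β, W2 h' * 2 ^ H.dist h h')) ∧
    SN (G □ H) (fun p : α × β => W1 p.1 * W2 p.2) = SN G W1 * SN H W2 := by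
  have hsum := SimpleGraph.sum_boxProd_mul_pow_dist hG hH W1 W2 2
  refine ⟨fun g h => hsum (g, h), ?_⟩
  simp only [SN_eq_sup_sum_mul_pow_dist_from, hsum]
  rw [← Finset.univ_product_univ]
  exact Finset.sup_product_mul _ _ (fun g => ∑ g', W1 g' * 2 ^ G.dist g g')
    (fun h => ∑ h', W2 h' * 2 ^ H.dist h h')
end
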